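/- Let α̂ ∈ ℝ^n and A = S_n·α̂ be its orbit under coordinate permutations. Let β̂₁,…,β̂_m ∈ ℝ^n lie in the interior of conv(A ∪ {0}) and lie in pairwise distinct S_n-orbits, and set B_i = S_n·β̂_i. Let f(x) = c·Σ_{α∈A} exp(⟨α,x⟩) − Σ_{i=1}^m d_i·Σ_{β∈B_i} exp(⟨β,x⟩) + w with c > 0, d_i > 0 for all i, and w ∈ ℝ. Then f* = f^SAGE, where f* = inf_{x∈ℝ^n} f(x) and f^SAGE = sup{λ ∈ ℝ : f − λ ∈ C_SAGE(T)} with T = A ∪ B₁ ∪ … ∪ B_m ∪ {0}. -/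

import Mathlib

open Finset

noncomputable def dotp {n : ℕ} (a x : Fin n → ℝ) : ℝ := ∑ i, a i * x i

noncomputable def monom {n : ℕ} (α : Fin n → ℕ) (x : Fin n → ℝ) : ℝ := ∏ i, x i ^ α i

/-- The AGE cone `C_AGE(A, β)`: nonnegative signomials supported on `A ∪ {β}` whose
coefficients on `A` are nonnegative (only the `β`-term may be negative). -/
def IsAGE {n : ℕ} (A : Finset (Fin n → ℝ)) (β : Fin n → ℝ) (f : (Fin n → ℝ) → ℝ) : Prop :=
  ∃ c : (Fin n → ℝ) → ℝ, (∀ α ∈ A, 0 ≤ c α) ∧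
    (∀ x, f x = (∑ α ∈ A, c α * Real.exp (dotp α x)) + c β * Real.exp (dotp β x)) ∧
    (∀ x, 0 ≤ f x)

/-- The SAGE cone `C_SAGE(T) = Σ_{β ∈ T} C_AGE(T \ {β}, β)`. -/
def IsSAGE {n : ℕ} (T : Finset (Fin n → ℝ)) (f : (Fin n → ℝ) → ℝ) : Prop :=
  ∃ g : (Fin n → ℝ) → ((Fin n → ℝ) → ℝ),
    (∀ β ∈ T, IsAGE (T.erase β) β (g β)) ∧ (∀ x, f x = ∑ β ∈ T, g β x)

/-- `f^SAGE = sup {l : f - l ∈ C_SAGE(T ∪ {0})}`, as an extended real number. -/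
noncomputable def sageBound {n : ℕ} (T : Finset (Fin n → ℝ)) (f : (Fin n → ℝ) → ℝ) : EReal :=
  sSup ((fun l : ℝ => (l : EReal)) '' {l : ℝ | IsSAGE (insert 0 T) (fun x => f x - l)})

/-- `f* = inf_{x ∈ ℝⁿ} f(x)`, as an extended real number. -/
noncomputable def infStar {n : ℕ} (f : (Fin n → ℝ) → ℝ) : EReal := ⨅ x, (f x : EReal)

/-- The AG cone `C_AG(A, β)` of nonnegative polynomials with nonnegative coefficients
on `A`, vanishing coefficients on non-even points of `A`, and possibly negative
coefficient on `β`. -/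
def IsAG {n : ℕ} (A : Finset (Fin n → ℕ)) (β : Fin n → ℕ) (f : (Fin n → ℝ) → ℝ) : Prop :=
  ∃ c : (Fin n → ℕ) → ℝ, (∀ α ∈ A, 0 ≤ c α) ∧
    (∀ γ ∈ A, (¬ ∀ i, Even (γ i)) → c γ = 0) ∧
    (∀ x, f x = (∑ α ∈ A, c α * monom α x) + c β * monom β x) ∧
    (∀ x, 0 ≤ f x)

/-- The SONC cone `C_SONC(T) = Σ_{β ∈ T} C_AG(T \ {β}, β)`. -/
def IsSONC {n : ℕ} (T : Finset (Fin n → ℕ)) (f : (Fin n → ℝ) → ℝ) : Prop :=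
  ∃ g : (Fin n → ℕ) → ((Fin n → ℝ) → ℝ),
    (∀ β ∈ T, IsAG (T.erase β) β (g β)) ∧ (∀ x, f x = ∑ β ∈ T, g β x)

/-- `f^SONC = sup {l : f - l ∈ C_SONC(T ∪ {0})}`, as an extended real number. -/
noncomputable def soncBound {n : ℕ} (T : Finset (Fin n → ℕ)) (f : (Fin n → ℝ) → ℝ) : EReal :=
  sSup ((fun l : ℝ => (l : EReal)) '' {l : ℝ | IsSONC (insert 0 T) (fun x => f x - l)})

/-- Action of a permutation on a real vector: `(σ·x) i = x (σ⁻¹ i)`. -/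
def permAct {n : ℕ} (σ : Equiv.Perm (Fin n)) (x : Fin n → ℝ) : Fin n → ℝ := fun i => x (σ⁻¹ i)

/-- Action of a permutation on an exponent vector. -/
def permActN {m : ℕ} (σ : Equiv.Perm (Fin m)) (x : Fin m → ℕ) : Fin m → ℕ := fun i => x (σ⁻¹ i)

/-- The orbit of a vector under the symmetric group, as a finite set. -/
noncomputable def orbitF {n : ℕ} (v : Fin n → ℝ) : Finset (Fin n → ℝ) :=
  Finset.univ.image (fun σ : Equiv.Perm (Fin n) => permAct σ v)

/-- The monomial mean `m_α^{(m)}(x) = (1/m!) Σ_{σ ∈ S_m} x^{σ(α)}`. -/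
noncomputable def mmean {m : ℕ} (α : Fin m → ℕ) (x : Fin m → ℝ) : ℝ :=
  (1/(m.factorial : ℝ)) * ∑ σ : Equiv.Perm (Fin m), monom (permActN σ α) x

/-!
`f^SAGE ≤ f*` because SAGE signomials are nonnegative. Conversely, fix `l < f*`. The coordinate
sum takes the value `0` at `0` and `s = ∑ α̂ⱼ` on the whole orbit `A`, so interiority forces
`s ≠ 0` and writes each `β̂ᵢ = (1 - tᵢ) • 0 + ∑ θᵢ(α) • α` with `0 < tᵢ < 1`. Weighted AM–GM
turns this into an AGE certificate for `e^{⟨β̂ᵢ, x⟩}`, and since the AGE cones are permuted among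
themselves by `S_n`, its `S_n`-average is a SAGE certificate of
`M_{Bᵢ}(x) ≤ (1 - tᵢ) e^{tᵢ q} + tᵢ e^{(tᵢ - 1) q} M_A(x)`, `M` denoting orbit means. Choosing
`q` as the critical point of `f` along the diagonal `x = (q / s, …, q / s)`, the combination
`∑ dᵢ |Bᵢ| (…)` reproduces the `A`-part of `f` exactly and leaves the constant
`f(q / s, …, q / s) - l > 0`.
-/

open Real Filter Topology

section Orbit

variable {n : ℕ}

lemma permAct_mul (σ τ : Equiv.Perm (Fin n)) (x : Fin n → ℝ) :
    permAct σ (permAct τ x) = permAct (σ * τ) x := by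
  funext i; simp [permAct, Equiv.Perm.mul_apply]

@[simp] lemma permAct_one (x : Fin n → ℝ) : permAct 1 x = x := rfl

@[simp] lemma permAct_zero (σ : Equiv.Perm (Fin n)) : permAct σ 0 = 0 := rfl

@[simp] lemma permAct_inv_permAct (σ : Equiv.Perm (Fin n)) (x : Fin n → ℝ) :
    permAct σ⁻¹ (permAct σ x) = x := by
  rw [permAct_mul, inv_mul_cancel, permAct_one]

lemma permAct_injective (σ : Equiv.Perm (Fin n)) : Function.Injective (permAct σ) :=
  Function.LeftInverse.injective (permAct_inv_permAct σ)

lemma dotp_permAct (σ : Equiv.Perm (Fin n)) (a x : Fin n → ℝ) :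
    dotp (permAct σ a) x = dotp a (permAct σ⁻¹ x) :=
  Fintype.sum_equiv σ⁻¹ _ _ fun j => by simp [permAct]

lemma sum_permAct (σ : Equiv.Perm (Fin n)) (v : Fin n → ℝ) :
    ∑ j, permAct σ v j = ∑ j, v j :=
  Fintype.sum_equiv σ⁻¹ _ _ fun _ => rfl

lemma mem_orbitF {v β : Fin n → ℝ} : β ∈ orbitF v ↔ ∃ σ, permAct σ v = β := by
  simp [orbitF]

lemma permAct_mem_orbitF {v β : Fin n → ℝ} (h : β ∈ orbitF v) (σ : Equiv.Perm (Fin n)) :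
    permAct σ β ∈ orbitF v := by
  obtain ⟨τ, rfl⟩ := mem_orbitF.1 h
  exact mem_orbitF.2 ⟨σ * τ, (permAct_mul σ τ v).symm⟩

lemma self_mem_orbitF (v : Fin n → ℝ) : v ∈ orbitF v := mem_orbitF.2 ⟨1, rfl⟩

lemma orbitF_subset_of_mem {v β : Fin n → ℝ} (h : β ∈ orbitF v) : orbitF β ⊆ orbitF v := by
  intro γ hγ
  obtain ⟨σ, rfl⟩ := mem_orbitF.1 hγ
  exact permAct_mem_orbitF h σ

lemma orbitF_eq_of_mem {v β : Fin n → ℝ} (h : β ∈ orbitF v) : orbitF β = orbitF v := by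
  refine (orbitF_subset_of_mem h).antisymm (orbitF_subset_of_mem ?_)
  obtain ⟨σ, rfl⟩ := mem_orbitF.1 h
  exact mem_orbitF.2 ⟨σ⁻¹, permAct_inv_permAct σ v⟩

lemma image_permAct_orbitF (σ : Equiv.Perm (Fin n)) (v : Fin n → ℝ) :
    (orbitF v).image (permAct σ) = orbitF v :=
  eq_of_subset_of_card_le (image_subset_iff.2 fun _ h => permAct_mem_orbitF h σ)
    (card_image_of_injective _ (permAct_injective σ)).ge

lemma sum_eq_of_mem_orbitF {v β : Fin n → ℝ} (h : β ∈ orbitF v) : ∑ j, β j = ∑ j, v j := by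
  obtain ⟨σ, rfl⟩ := mem_orbitF.1 h
  exact sum_permAct σ v

lemma card_filter_permAct_eq {v β : Fin n → ℝ} (h : β ∈ orbitF v) :
    #{σ | permAct σ v = β} = #{σ | permAct σ v = v} := by
  obtain ⟨τ, rfl⟩ := mem_orbitF.1 h
  refine card_nbij' (τ⁻¹ * ·) (τ * ·) ?_ ?_ (fun σ _ => by simp) (fun σ _ => by simp)
  · intro σ hσ
    simp only [mem_coe, mem_filter, mem_univ, true_and] at hσ ⊢
    rw [← permAct_mul, hσ, permAct_inv_permAct]
  · intro σ hσ
    simp only [mem_coe, mem_filter, mem_univ, true_and] at hσ ⊢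
    rw [← permAct_mul, hσ]

lemma sum_perm_eq_card_smul_sum {M : Type*} [AddCommMonoid M] (v : Fin n → ℝ)
    (F : (Fin n → ℝ) → M) :
    ∑ σ, F (permAct σ v) = #{σ | permAct σ v = v} • ∑ β ∈ orbitF v, F β := by
  rw [sum_comp, smul_sum]
  exact sum_congr rfl fun β hβ => by rw [card_filter_permAct_eq hβ]

lemma sum_perm_div_card (v : Fin n → ℝ) (F : (Fin n → ℝ) → ℝ) :
    (∑ σ, F (permAct σ v)) / Fintype.card (Equiv.Perm (Fin n))
      = (∑ β ∈ orbitF v, F β) / #(orbitF v) := by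
  have hcard := sum_perm_eq_card_smul_sum v (fun _ => (1 : ℝ))
  have hstab : (#{σ | permAct σ v = v} : ℝ) ≠ 0 :=
    Nat.cast_ne_zero.2 (card_ne_zero.2 ⟨1, by simp⟩)
  simp only [sum_const, card_univ, nsmul_eq_mul, mul_one] at hcard
  rw [sum_perm_eq_card_smul_sum, hcard, nsmul_eq_mul, mul_div_mul_left _ _ hstab]

end Orbit

section Cones

variable {n : ℕ} {A B T : Finset (Fin n → ℝ)} {β : Fin n → ℝ} {F G : (Fin n → ℝ) → ℝ}

@[simp] lemma dotp_zero_left (x : Fin n → ℝ) : dotp 0 x = 0 := by simp [dotp]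

namespace IsAGE

lemma nonneg (h : IsAGE A β F) (x : Fin n → ℝ) : 0 ≤ F x := h.choose_spec.2.2 x

lemma zero : IsAGE A β fun _ => 0 :=
  ⟨0, fun _ _ => le_rfl, fun _ => by simp, fun _ => le_rfl⟩

lemma add (hF : IsAGE A β F) (hG : IsAGE A β G) : IsAGE A β fun x => F x + G x := by
  obtain ⟨c, hc, hFc, hF⟩ := hF
  obtain ⟨c', hc', hGc, hG⟩ := hG
  refine ⟨c + c', fun α hα => add_nonneg (hc α hα) (hc' α hα), fun x => ?_,
    fun x => add_nonneg (hF x) (hG x)⟩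
  simp only [hFc, hGc, Pi.add_apply, add_mul, sum_add_distrib]
  ring

lemma const_mul {a : ℝ} (ha : 0 ≤ a) (h : IsAGE A β F) : IsAGE A β fun x => a * F x := by
  obtain ⟨c, hc, hFc, hF⟩ := h
  refine ⟨a • c, fun α hα => mul_nonneg ha (hc α hα), fun x => ?_,
    fun x => mul_nonneg ha (hF x)⟩
  simp only [hFc, Pi.smul_apply, smul_eq_mul, mul_add, mul_sum, mul_assoc]

lemma mono (hAB : A ⊆ B) (hβ : β ∉ B) (h : IsAGE A β F) : IsAGE B β F := by
  classical
  obtain ⟨c, hc, hFc, hF⟩ := h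
  refine ⟨fun γ => if γ ∈ B ∧ γ ∉ A then 0 else c γ, fun γ hγ => ?_, fun x => ?_, hF⟩
  · dsimp only
    split_ifs with hγA
    exacts [le_rfl, hc γ (not_not.1 fun h => hγA ⟨hγ, h⟩)]
  · dsimp only
    rw [hFc, if_neg fun h => hβ h.1,
      ← sum_subset hAB fun γ hγ hγA => by rw [if_pos ⟨hγ, hγA⟩, zero_mul]]
    exact congrArg₂ _ (sum_congr rfl fun γ hγ => by rw [if_neg fun h => h.2 hγ]) rfl

lemma comp_permAct (h : IsAGE A β F) (σ : Equiv.Perm (Fin n)) :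
    IsAGE (A.image (permAct σ)) (permAct σ β) fun x => F (permAct σ⁻¹ x) := by
  obtain ⟨c, hc, hFc, hF⟩ := h
  refine ⟨fun γ => c (permAct σ⁻¹ γ), fun γ hγ => ?_, fun x => ?_, fun x => hF _⟩
  · obtain ⟨α, hα, rfl⟩ := mem_image.1 hγ
    simpa using hc α hα
  · dsimp only
    rw [sum_image fun _ _ _ _ h => permAct_injective σ h, hFc]
    simp only [permAct_inv_permAct, dotp_permAct]

lemma isSAGE (hβ : β ∈ T) (h : IsAGE (T.erase β) β F) : IsSAGE T F := by
  classical
  refine ⟨fun γ => if γ = β then F else fun _ => 0, fun γ _ => ?_, fun x => ?_⟩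
  · dsimp only
    split_ifs with hγ
    exacts [hγ ▸ h, zero]
  · simp [apply_ite (fun g : (Fin n → ℝ) → ℝ => g x), hβ]

end IsAGE

namespace IsSAGE

lemma nonneg (h : IsSAGE T F) (x : Fin n → ℝ) : 0 ≤ F x := by
  obtain ⟨g, hg, hF⟩ := h
  rw [hF]
  exact sum_nonneg fun β hβ => (hg β hβ).nonneg x

lemma zero : IsSAGE T fun _ => 0 :=
  ⟨fun _ _ => 0, fun _ _ => IsAGE.zero, fun _ => by simp⟩

lemma add (hF : IsSAGE T F) (hG : IsSAGE T G) : IsSAGE T fun x => F x + G x := by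
  obtain ⟨g, hg, hFg⟩ := hF
  obtain ⟨g', hg', hGg⟩ := hG
  exact ⟨fun β x => g β x + g' β x, fun β hβ => (hg β hβ).add (hg' β hβ),
    fun x => by simp only [hFg, hGg, sum_add_distrib]⟩

lemma const_mul {a : ℝ} (ha : 0 ≤ a) (h : IsSAGE T F) : IsSAGE T fun x => a * F x := by
  obtain ⟨g, hg, hFg⟩ := h
  exact ⟨fun β x => a * g β x, fun β hβ => (hg β hβ).const_mul ha,
    fun x => by simp only [hFg, mul_sum]⟩

lemma sum {ι : Type*} (s : Finset ι) {F : ι → (Fin n → ℝ) → ℝ}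
    (h : ∀ i ∈ s, IsSAGE T (F i)) : IsSAGE T fun x => ∑ i ∈ s, F i x := by
  classical
  induction s using Finset.induction_on with
  | empty => simpa using zero
  | insert i s hi ih =>
    simp only [sum_insert hi]
    exact (h i (mem_insert_self i s)).add (ih fun j hj => h j (mem_insert_of_mem hj))

end IsSAGE

lemma isSAGE_insert_zero_of_nonneg_coeffs {S : Finset (Fin n → ℝ)} (hS : S ⊆ T)
    {c : (Fin n → ℝ) → ℝ} (hc : ∀ γ ∈ S, γ ≠ 0 → 0 ≤ c γ) {K : ℝ}
    (hFc : ∀ x, F x = ∑ γ ∈ S, c γ * exp (dotp γ x) + K) (hF : ∀ x, 0 ≤ F x) :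
    IsSAGE (insert 0 T) F := by
  classical
  have hage : IsAGE (S.erase 0) 0 F := by
    refine ⟨Function.update c 0 (K + if (0 : Fin n → ℝ) ∈ S then c 0 else 0),
      fun γ hγ => ?_, fun x => ?_, hF⟩
    · rw [Function.update_of_ne (ne_of_mem_erase hγ)]
      exact hc γ (mem_of_mem_erase hγ) (ne_of_mem_erase hγ)
    · rw [sum_congr rfl fun γ hγ => by rw [Function.update_of_ne (ne_of_mem_erase hγ)],
        Function.update_self, dotp_zero_left, exp_zero, mul_one, hFc]
      split_ifs with h0
      · rw [← sum_erase_add S _ h0, dotp_zero_left, exp_zero, mul_one]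
        ring
      · rw [erase_eq_of_notMem h0, add_zero]
  refine (hage.mono ?_ (notMem_erase _ _)).isSAGE (mem_insert_self _ _)
  exact erase_subset_erase _ (hS.trans (subset_insert _ _))

lemma isSAGE_insert_zero_const {K : ℝ} (hK : 0 ≤ K) : IsSAGE (insert 0 T) fun _ => K :=
  isSAGE_insert_zero_of_nonneg_coeffs (empty_subset T) (c := 0) (K := K) (by simp)
    (fun _ => by simp) fun _ => hK

lemma sageBound_le_infStar (T : Finset (Fin n → ℝ)) (f : (Fin n → ℝ) → ℝ) :
    sageBound T f ≤ infStar f := by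
  refine sSup_le ?_
  rintro _ ⟨l, hl, rfl⟩
  exact le_iInf fun x => EReal.coe_le_coe_iff.2 (sub_nonneg.1 (hl.nonneg x))

lemma infStar_le_sageBound {f : (Fin n → ℝ) → ℝ}
    (h : ∀ l : ℝ, (∀ x, l < f x) → IsSAGE (insert 0 T) fun x => f x - l) :
    infStar f ≤ sageBound T f := by
  refine le_of_forall_lt fun e he => ?_
  obtain ⟨l, hel, hl⟩ := EReal.lt_iff_exists_real_btwn.1 he
  have hlf : ∀ x, l < f x := fun x => EReal.coe_lt_coe_iff.1 (hl.trans_le (iInf_le _ x))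
  exact hel.trans_le (le_sSup ⟨l, h l hlf, rfl⟩)

end Cones

section Certificates

variable {n : ℕ}

lemma dotp_eq_dotProduct (a x : Fin n → ℝ) : dotp a x = a ⬝ᵥ x := rfl

lemma dotp_const_right (a : Fin n → ℝ) (r : ℝ) : dotp a (fun _ => r) = (∑ j, a j) * r := by
  simp [dotp, sum_mul]

lemma exp_dotp_le_sum {S : Finset (Fin n → ℝ)} {θ : (Fin n → ℝ) → ℝ} {b : Fin n → ℝ}
    (hθ0 : ∀ γ ∈ S, 0 ≤ θ γ) (hθ1 : ∑ γ ∈ S, θ γ = 1) (hθb : ∑ γ ∈ S, θ γ • γ = b)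
    (x y : Fin n → ℝ) :
    exp (dotp b x) ≤ ∑ γ ∈ S, θ γ * exp (dotp (b - γ) y) * exp (dotp γ x) := by
  have hb : dotp b (x - y) = ∑ γ ∈ S, θ γ * dotp γ (x - y) := by
    simp [dotp_eq_dotProduct, ← hθb, sum_dotProduct, smul_dotProduct, mul_sub, sum_sub_distrib]
  have hjensen := convexOn_exp.map_sum_le hθ0 hθ1 (p := fun γ => dotp γ (x - y))
    fun _ _ => Set.mem_univ _
  simp only [smul_eq_mul] at hjensen
  calc exp (dotp b x) = exp (dotp b (x - y)) * exp (dotp b y) := by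
        rw [← exp_add]
        simp only [dotp_eq_dotProduct, dotProduct_sub, sub_add_cancel]
    _ ≤ (∑ γ ∈ S, θ γ * exp (dotp γ (x - y))) * exp (dotp b y) := by
        rw [hb]; gcongr
    _ = ∑ γ ∈ S, θ γ * exp (dotp (b - γ) y) * exp (dotp γ x) := by
        rw [sum_mul]
        refine sum_congr rfl fun γ _ => ?_
        simp only [dotp_eq_dotProduct, dotProduct_sub, sub_dotProduct, mul_assoc, ← exp_add]
        ring_nf

lemma isAGE_amgm {S : Finset (Fin n → ℝ)} {θ : (Fin n → ℝ) → ℝ} {b : Fin n → ℝ} (hbS : b ∉ S)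
    (hθ0 : ∀ γ ∈ S, 0 ≤ θ γ) (hθ1 : ∑ γ ∈ S, θ γ = 1) (hθb : ∑ γ ∈ S, θ γ • γ = b)
    (y : Fin n → ℝ) :
    IsAGE S b fun x => ∑ γ ∈ S, θ γ * exp (dotp (b - γ) y) * exp (dotp γ x) - exp (dotp b x) := by
  classical
  refine ⟨fun γ => if γ = b then -1 else θ γ * exp (dotp (b - γ) y), fun γ hγ => ?_,
    fun x => ?_, fun x => sub_nonneg.2 (exp_dotp_le_sum hθ0 hθ1 hθb x y)⟩
  · dsimp only
    rw [if_neg (ne_of_mem_of_not_mem hγ hbS)]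
    exact mul_nonneg (hθ0 γ hγ) (exp_pos _).le
  · dsimp only
    have hcoeff : ∀ γ ∈ S, (if γ = b then -1 else θ γ * exp (dotp (b - γ) y)) * exp (dotp γ x)
        = θ γ * exp (dotp (b - γ) y) * exp (dotp γ x) := fun γ hγ => by
      rw [if_neg (ne_of_mem_of_not_mem hγ hbS)]
    rw [if_pos rfl, sum_congr rfl hcoeff]
    ring

end Certificates

lemma exists_mem_Ioo_of_mem_interior_convexHull {E : Type*} [NormedAddCommGroup E] [NormedSpace ℝ E]
    [CompleteSpace E] (L : E →L[ℝ] ℝ) (hL : Function.Surjective L) {S : Set E} {s : ℝ}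
    (hS : ∀ z ∈ S, L z = s) {b : E} (hb : b ∈ interior (convexHull ℝ (S ∪ {0}))) :
    s ≠ 0 ∧ ∃ t ∈ Set.Ioo (0 : ℝ) 1, L b = t * s := by
  have himage : L '' convexHull ℝ (S ∪ {0}) ⊆ segment ℝ 0 s := by
    have hL := (L : E →ₗ[ℝ] ℝ).image_convexHull (S ∪ {0})
    rw [ContinuousLinearMap.coe_coe] at hL
    rw [hL, ← convexHull_pair]
    refine convexHull_mono ?_
    rintro _ ⟨z, hz | hz, rfl⟩
    · simp [hS z hz]
    · simp [Set.mem_singleton_iff.1 hz]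
  have hLb : L b ∈ Set.Ioo (min 0 s) (max 0 s) := by
    rw [← interior_Icc, ← segment_eq_Icc']
    exact interior_mono himage ((L.isOpenMap hL).image_interior_subset _ ⟨b, hb, rfl⟩)
  rcases lt_trichotomy s 0 with hs | hs | hs
  · simp only [min_eq_right hs.le, max_eq_left hs.le, Set.mem_Ioo] at hLb
    refine ⟨hs.ne, L b / s, ⟨div_pos_of_neg_of_neg hLb.2 hs, (div_lt_one_of_neg hs).2 hLb.1⟩,
      (div_mul_cancel₀ _ hs.ne).symm⟩
  · simp [hs] at hLb
  · simp only [min_eq_left hs.le, max_eq_right hs.le, Set.mem_Ioo] at hLb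
    exact ⟨hs.ne', L b / s, ⟨div_pos hLb.1 hs, (div_lt_one hs).2 hLb.2⟩,
      (div_mul_cancel₀ _ hs.ne').symm⟩

lemma exists_sum_mul_exp_eq {ι : Type*} [Fintype ι] [Nonempty ι] {C : ℝ} (hC : 0 < C)
    {D t : ι → ℝ} (hD : ∀ i, 0 < D i) (ht : ∀ i, t i ∈ Set.Ioo (0 : ℝ) 1) :
    ∃ q, ∑ i, D i * t i * exp (t i * q) = C * exp q := by
  set ρ : ℝ → ℝ := fun q => ∑ i, D i * t i * exp ((t i - 1) * q)
  have hρ : Continuous ρ := by fun_prop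
  have hdecay : ∀ i, Tendsto (fun q => exp ((t i - 1) * q)) atTop (𝓝 0) := fun i =>
    tendsto_exp_atBot.comp (tendsto_id.const_mul_atTop_of_neg (by linarith [(ht i).2]))
  have htop : Tendsto ρ atTop (𝓝 0) := by
    simpa using tendsto_finsetSum univ fun i _ => (hdecay i).const_mul (D i * t i)
  obtain ⟨i₀⟩ := ‹Nonempty ι›
  have hbot : Tendsto ρ atBot atTop := by
    refine tendsto_atTop_mono (fun q =>
      single_le_sum (f := fun i => D i * t i * exp ((t i - 1) * q))
        (fun i _ => mul_nonneg (mul_pos (hD i) (ht i).1).le (exp_pos _).le) (mem_univ i₀)) ?_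
    exact (tendsto_exp_atTop.comp (tendsto_id.const_mul_atBot_of_neg
      (by linarith [(ht i₀).2]))).const_mul_atTop (mul_pos (hD i₀) (ht i₀).1)
  obtain ⟨q, hq⟩ := mem_range_of_exists_le_of_exists_ge hρ
    ((htop.eventually (gt_mem_nhds hC)).exists.imp fun _ => le_of_lt)
    (hbot.eventually (eventually_ge_atTop C)).exists
  refine ⟨q, ?_⟩
  rw [← hq, sum_mul]
  refine sum_congr rfl fun i _ => ?_
  rw [mul_assoc (D i * t i), ← exp_add]
  ring_nf

section Symmetric

variable {n : ℕ}

lemma exists_sum_eq_mul_of_mem_interior_convexHull (hn : n ≠ 0) {v b : Fin n → ℝ}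
    (hb : b ∈ interior (convexHull ℝ ((↑(orbitF v) : Set (Fin n → ℝ)) ∪ {0}))) :
    ∑ j, v j ≠ 0 ∧ ∃ t ∈ Set.Ioo (0 : ℝ) 1, ∑ j, b j = t * ∑ j, v j := by
  set L : (Fin n → ℝ) →L[ℝ] ℝ := ∑ j, ContinuousLinearMap.proj j
  have hL : ∀ z, L z = ∑ j, z j := fun z => by simp [L]
  have hsurj : Function.Surjective L := fun r =>
    ⟨Pi.single ⟨0, Nat.pos_of_ne_zero hn⟩ r, by simp [hL]⟩
  simpa only [hL] using exists_mem_Ioo_of_mem_interior_convexHull L hsurj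
    (fun z hz => (hL z).trans (sum_eq_of_mem_orbitF hz)) hb

lemma sum_perm_exp_div_card (γ x : Fin n → ℝ) :
    (∑ σ : Equiv.Perm (Fin n), exp (dotp γ (permAct σ⁻¹ x))) / Fintype.card (Equiv.Perm (Fin n))
      = (∑ α ∈ orbitF γ, exp (dotp α x)) / #(orbitF γ) := by
  simp_rw [← dotp_permAct]
  exact sum_perm_div_card γ fun α => exp (dotp α x)

lemma sum_perm_amgm_div_card {v y : Fin n → ℝ} (h0 : (0 : Fin n → ℝ) ∉ orbitF v)
    (hy : ∀ γ ∈ orbitF v, dotp γ y = dotp v y) (θ : (Fin n → ℝ) → ℝ) (b x : Fin n → ℝ) :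
    (∑ σ : Equiv.Perm (Fin n), (∑ γ ∈ insert 0 (orbitF v),
        θ γ * exp (dotp (b - γ) y) * exp (dotp γ (permAct σ⁻¹ x))
        - exp (dotp b (permAct σ⁻¹ x)))) / Fintype.card (Equiv.Perm (Fin n))
      = θ 0 * exp (dotp b y)
        + (∑ γ ∈ orbitF v, θ γ) * exp (dotp b y - dotp v y)
          * ((∑ α ∈ orbitF v, exp (dotp α x)) / #(orbitF v))
        - (∑ β ∈ orbitF b, exp (dotp β x)) / #(orbitF b) := by
  have hG : (Fintype.card (Equiv.Perm (Fin n)) : ℝ) ≠ 0 := Nat.cast_ne_zero.2 Fintype.card_ne_zero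
  have hzero : (∑ σ : Equiv.Perm (Fin n),
      θ 0 * exp (dotp (b - 0) y) * exp (dotp 0 (permAct σ⁻¹ x)))
        / Fintype.card (Equiv.Perm (Fin n)) = θ 0 * exp (dotp b y) := by
    simp [hG]
  have horbit : ∀ γ ∈ orbitF v, (∑ σ : Equiv.Perm (Fin n),
      θ γ * exp (dotp (b - γ) y) * exp (dotp γ (permAct σ⁻¹ x)))
        / Fintype.card (Equiv.Perm (Fin n))
      = θ γ * exp (dotp b y - dotp v y) * ((∑ α ∈ orbitF v, exp (dotp α x)) / #(orbitF v)) := by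
    intro γ hγ
    rw [← mul_sum, mul_div_assoc, sum_perm_exp_div_card, orbitF_eq_of_mem hγ, ← hy γ hγ,
      dotp_eq_dotProduct, sub_dotProduct]
    rfl
  rw [sum_sub_distrib, sum_comm, sub_div, sum_div, sum_insert h0, sum_perm_exp_div_card, hzero,
    sum_congr rfl horbit, ← sum_mul, ← sum_mul]

end Symmetric

section OrbitAMGM

variable {n : ℕ}

lemma zero_notMem_orbitF {v : Fin n → ℝ} (hs : ∑ j, v j ≠ 0) : (0 : Fin n → ℝ) ∉ orbitF v :=
  fun h => hs (by simpa using (sum_eq_of_mem_orbitF h).symm)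

lemma notMem_insert_zero_orbitF {v β : Fin n → ℝ} (hs : ∑ j, v j ≠ 0) {t : ℝ}
    (ht : t ∈ Set.Ioo (0 : ℝ) 1) (hβ : ∑ j, β j = t * ∑ j, v j) :
    β ∉ insert 0 (orbitF v) := by
  intro hβv
  rcases mem_insert.1 hβv with rfl | hβv
  · simp only [Pi.zero_apply, sum_const_zero] at hβ
    exact mul_ne_zero ht.1.ne' hs hβ.symm
  · rw [sum_eq_of_mem_orbitF hβv] at hβ
    exact ht.2.ne (mul_right_cancel₀ hs (by rw [one_mul]; exact hβ.symm))

/-- Since the coordinate sum is `0` on `0` and `∑ v` on the orbit, it reads off the weight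
carried by the orbit. -/
lemma sum_orbitF_weight_eq {v b : Fin n → ℝ} (hs : ∑ j, v j ≠ 0) {θ : (Fin n → ℝ) → ℝ}
    (hθb : ∑ γ ∈ insert 0 (orbitF v), θ γ • γ = b) {t : ℝ} (hbt : ∑ j, b j = t * ∑ j, v j) :
    ∑ γ ∈ orbitF v, θ γ = t := by
  have hsum : ∑ j, b j = ∑ γ ∈ insert 0 (orbitF v), θ γ * ∑ j, γ j := by
    rw [← hθb]
    simp only [Finset.sum_apply, Pi.smul_apply, smul_eq_mul, mul_sum]
    exact sum_comm
  have horbit : ∑ γ ∈ orbitF v, θ γ * ∑ j, γ j = (∑ γ ∈ orbitF v, θ γ) * ∑ j, v j := by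
    rw [sum_mul]
    exact sum_congr rfl fun γ hγ => by rw [sum_eq_of_mem_orbitF hγ]
  rw [sum_insert (zero_notMem_orbitF hs), horbit, hbt] at hsum
  simp only [Pi.zero_apply, sum_const_zero, mul_zero, zero_add] at hsum
  exact (mul_right_cancel₀ hs hsum).symm

lemma isSAGE_amgm_comp_permAct {S T : Finset (Fin n → ℝ)} {σ : Equiv.Perm (Fin n)}
    (hS : S.image (permAct σ) = S) (hST : S ⊆ T) {b : Fin n → ℝ} (hbS : permAct σ b ∉ S)
    (hbT : permAct σ b ∈ T) {θ : (Fin n → ℝ) → ℝ} (hθ0 : ∀ γ ∈ S, 0 ≤ θ γ)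
    (hθ1 : ∑ γ ∈ S, θ γ = 1) (hθb : ∑ γ ∈ S, θ γ • γ = b) (y : Fin n → ℝ) {a : ℝ} (ha : 0 ≤ a) :
    IsSAGE T fun x => a * (∑ γ ∈ S, θ γ * exp (dotp (b - γ) y) * exp (dotp γ (permAct σ⁻¹ x))
      - exp (dotp b (permAct σ⁻¹ x))) := by
  have hb : b ∉ S := fun h => hbS (hS ▸ mem_image_of_mem _ h)
  have hage := ((isAGE_amgm hb hθ0 hθ1 hθb y).comp_permAct σ).const_mul ha
  rw [hS] at hage
  exact (hage.mono (fun γ hγ => mem_erase.2 ⟨fun h : γ = permAct σ b => hbS (h ▸ hγ), hST hγ⟩)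
    (notMem_erase _ _)).isSAGE hbT

/-- The `S_n`-average of the AM–GM certificate of `b = (1 - t) • 0 + ∑ θ γ • γ`, centred at the
diagonal point where `⟨·, x⟩ = q` on the orbit of `v`. -/
lemma isSAGE_orbit_amgm {v b : Fin n → ℝ} {T : Finset (Fin n → ℝ)} (hvT : orbitF v ⊆ T)
    (hbT : orbitF b ⊆ T) (hb : b ∈ interior (convexHull ℝ ((↑(orbitF v) : Set (Fin n → ℝ)) ∪ {0})))
    (hs : ∑ j, v j ≠ 0) {t : ℝ} (ht : t ∈ Set.Ioo (0 : ℝ) 1) (hbt : ∑ j, b j = t * ∑ j, v j)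
    (q : ℝ) :
    IsSAGE (insert 0 T) fun x => (1 - t) * exp (t * q)
      + t * exp (t * q - q) * ((∑ α ∈ orbitF v, exp (dotp α x)) / #(orbitF v))
      - (∑ β ∈ orbitF b, exp (dotp β x)) / #(orbitF b) := by
  have h0 := zero_notMem_orbitF hs
  have hcoe : (↑(orbitF v) : Set (Fin n → ℝ)) ∪ {0} = ↑(insert 0 (orbitF v)) := by
    rw [coe_insert, Set.insert_eq, Set.union_comm]
  obtain ⟨θ, hθ0, hθ1, hθb⟩ := mem_convexHull'.1 (hcoe ▸ interior_subset hb)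
  have hθv := sum_orbitF_weight_eq hs hθb hbt
  have hθzero : θ 0 = 1 - t := by rw [← hθ1, sum_insert h0, hθv]; ring
  set y : Fin n → ℝ := fun _ => q / ∑ j, v j
  have hdot : ∀ β : Fin n → ℝ, dotp β y = (∑ j, β j) / (∑ j, v j) * q := fun β => by
    rw [dotp_const_right]; ring
  have hdotv : ∀ γ ∈ orbitF v, dotp γ y = q := fun γ hγ => by
    rw [hdot, sum_eq_of_mem_orbitF hγ, div_self hs, one_mul]
  have hdotb : dotp b y = t * q := by rw [hdot, hbt, mul_div_cancel_right₀ _ hs]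
  have hG : (0 : ℝ) ≤ 1 / Fintype.card (Equiv.Perm (Fin n)) := by positivity
  have hinv : ∀ σ : Equiv.Perm (Fin n),
      (insert 0 (orbitF v)).image (permAct σ) = insert 0 (orbitF v) :=
    fun σ => by rw [image_insert, permAct_zero, image_permAct_orbitF]
  have hσb : ∀ σ : Equiv.Perm (Fin n), permAct σ b ∈ orbitF b := fun σ =>
    permAct_mem_orbitF (self_mem_orbitF b) σ
  convert IsSAGE.sum univ fun σ _ => isSAGE_amgm_comp_permAct (hinv σ)
    (insert_subset_insert 0 hvT)
    (notMem_insert_zero_orbitF hs ht ((sum_eq_of_mem_orbitF (hσb σ)).trans hbt))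
    (mem_insert_of_mem (hbT (hσb σ))) hθ0 hθ1 hθb y hG using 2 with x
  rw [← mul_sum, one_div_mul_eq_div, sum_perm_amgm_div_card h0 (fun γ hγ => by
    rw [hdotv γ hγ, hdotv v (self_mem_orbitF v)]), hθzero, hθv, hdotb, hdotv v (self_mem_orbitF v)]

end OrbitAMGM

/-- By `hq` the `EA`-terms add up to `c * EA`, while the `e^{tᵢ q}` terms cancel. -/
lemma sub_sum_eq_add_sum_of_sum_mul_exp_eq {ι : Type*} [Fintype ι] {a : ℝ} (ha : 0 < a)
    {b : ι → ℝ} (hb : ∀ i, 0 < b i) {c q EA : ℝ} {d t EB : ι → ℝ}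
    (hq : ∑ i, d i * b i * t i * exp (t i * q) = c * a * exp q) :
    c * EA - ∑ i, d i * EB i = c * a * exp q - ∑ i, d i * b i * exp (t i * q)
      + ∑ i, d i * b i * ((1 - t i) * exp (t i * q) + t i * exp (t i * q - q) * (EA / a)
        - EB i / b i) := by
  have hsplit : ∀ i, d i * b i * ((1 - t i) * exp (t i * q) + t i * exp (t i * q - q) * (EA / a)
        - EB i / b i)
      = d i * b i * exp (t i * q) + d i * b i * t i * exp (t i * q) * (EA / (a * exp q) - 1)
        - d i * EB i := fun i => by
    have := (hb i).ne'
    rw [exp_sub]; field_simp; ring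
  have hcEA : c * a * exp q * (EA / (a * exp q)) = c * EA := by
    rw [mul_assoc c, mul_assoc, mul_div_cancel₀ _ (mul_pos ha (exp_pos q)).ne']
  simp only [hsplit, sum_sub_distrib, sum_add_distrib, ← sum_mul, hq]
  rw [mul_sub, hcEA]
  ring

lemma isSAGE_sub_of_forall_lt_of_ne_zero {n m : ℕ} (hn : n ≠ 0) [Nonempty (Fin m)]
    (ah : Fin n → ℝ) (bh : Fin m → (Fin n → ℝ))
    (hint : ∀ i, bh i ∈ interior (convexHull ℝ
      ((↑(orbitF ah) : Set (Fin n → ℝ)) ∪ {0})))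
    {c : ℝ} (hc : 0 < c) {d : Fin m → ℝ} (hd : ∀ i, 0 < d i) {w : ℝ}
    {f : (Fin n → ℝ) → ℝ}
    (hf : ∀ x, f x = c * (∑ α ∈ orbitF ah, exp (dotp α x))
      - (∑ i, d i * ∑ β ∈ orbitF (bh i), exp (dotp β x)) + w)
    {l : ℝ} (hl : ∀ x, l < f x) :
    IsSAGE (insert 0 (orbitF ah ∪ univ.biUnion fun i => orbitF (bh i))) fun x => f x - l := by
  set s := ∑ j, ah j
  obtain ⟨i₀⟩ := ‹Nonempty (Fin m)›
  have hs : s ≠ 0 := (exists_sum_eq_mul_of_mem_interior_convexHull hn (hint i₀)).1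
  choose t ht hbt using fun i => (exists_sum_eq_mul_of_mem_interior_convexHull hn (hint i)).2
  have hcard : ∀ v : Fin n → ℝ, (0 : ℝ) < #(orbitF v) := fun v =>
    Nat.cast_pos.2 (card_pos.2 ⟨v, self_mem_orbitF v⟩)
  -- `q` is the critical point of `f` restricted to the diagonal
  obtain ⟨q, hq⟩ := exists_sum_mul_exp_eq (C := c * #(orbitF ah))
    (D := fun i => d i * #(orbitF (bh i))) (mul_pos hc (hcard ah))
    (fun i => mul_pos (hd i) (hcard (bh i))) ht
  set pt : Fin n → ℝ := fun _ => q / s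
  have hdot : ∀ {v β : Fin n → ℝ} {r : ℝ}, β ∈ orbitF v → ∑ j, v j = r * s → dotp β pt = r * q :=
    fun hβ hv => by
      rw [dotp_const_right, sum_eq_of_mem_orbitF hβ, hv, mul_assoc, mul_div_cancel₀ q hs]
  have hfpt :
      f pt = c * #(orbitF ah) * exp q - ∑ i, d i * #(orbitF (bh i)) * exp (t i * q) + w := by
    have hA : ∀ α ∈ orbitF ah, exp (dotp α pt) = exp q := fun α hα => by
      rw [hdot hα (one_mul s).symm, one_mul]
    have hB : ∀ i, d i * ∑ β ∈ orbitF (bh i), exp (dotp β pt)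
        = d i * #(orbitF (bh i)) * exp (t i * q) := fun i => by
      rw [sum_congr rfl fun β hβ => by rw [hdot hβ (hbt i)], sum_const, nsmul_eq_mul, mul_assoc]
    rw [hf pt, sum_congr rfl hA, sum_const, nsmul_eq_mul, sum_congr rfl fun i _ => hB i]
    ring
  have hcert : ∀ x, f x - l = (f pt - l) + ∑ i, d i * #(orbitF (bh i)) * ((1 - t i) * exp (t i * q)
      + t i * exp (t i * q - q) * ((∑ α ∈ orbitF ah, exp (dotp α x)) / #(orbitF ah))
      - (∑ β ∈ orbitF (bh i), exp (dotp β x)) / #(orbitF (bh i))) := fun x => by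
    rw [hf x, hfpt]
    linear_combination sub_sum_eq_add_sum_of_sum_mul_exp_eq (hcard ah) (fun i => hcard (bh i))
      (EA := ∑ α ∈ orbitF ah, exp (dotp α x)) (EB := fun i => ∑ β ∈ orbitF (bh i), exp (dotp β x))
      hq
  rw [show (fun x => f x - l) = _ from funext hcert]
  refine (isSAGE_insert_zero_const (sub_pos.2 (hl pt)).le).add (IsSAGE.sum _ fun i _ => ?_)
  refine (isSAGE_orbit_amgm subset_union_left ?_ (hint i) hs (ht i) (hbt i) q).const_mul
    (mul_pos (hd i) (hcard (bh i))).le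
  exact (subset_biUnion_of_mem (fun i => orbitF (bh i)) (mem_univ i)).trans subset_union_right

lemma isSAGE_sub_of_forall_lt {n m : ℕ} (ah : Fin n → ℝ) (bh : Fin m → (Fin n → ℝ))
    (hint : ∀ i, bh i ∈ interior (convexHull ℝ
      ((↑(orbitF ah) : Set (Fin n → ℝ)) ∪ {0})))
    {c : ℝ} (hc : 0 < c) {d : Fin m → ℝ} (hd : ∀ i, 0 < d i) {w : ℝ}
    {f : (Fin n → ℝ) → ℝ}
    (hf : ∀ x, f x = c * (∑ α ∈ orbitF ah, exp (dotp α x))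
      - (∑ i, d i * ∑ β ∈ orbitF (bh i), exp (dotp β x)) + w)
    {l : ℝ} (hl : ∀ x, l < f x) :
    IsSAGE (insert 0 (orbitF ah ∪ univ.biUnion fun i => orbitF (bh i))) fun x => f x - l := by
  rcases eq_or_ne n 0 with rfl | hn
  · rw [show (fun x => f x - l) = fun _ => f 0 - l from funext fun x => by
      rw [Subsingleton.elim x 0]]
    exact isSAGE_insert_zero_const (sub_pos.2 (hl 0)).le
  rcases isEmpty_or_nonempty (Fin m) with hm | hm
  · exact isSAGE_insert_zero_of_nonneg_coeffs subset_union_left (c := fun _ => c)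
      (fun _ _ _ => hc.le) (K := w - l) (fun x => by
        simp only [hf x, mul_sum, univ_eq_empty, sum_empty, sub_zero]; ring)
      fun x => (sub_pos.2 (hl x)).le
  · exact isSAGE_sub_of_forall_lt_of_ne_zero hn ah bh hint hc hd hf hl

theorem stmt9_general {n m : ℕ} (ah : Fin n → ℝ) (bh : Fin m → (Fin n → ℝ))
    (hint : ∀ i, bh i ∈ interior (convexHull ℝ
      ((↑(orbitF ah) : Set (Fin n → ℝ)) ∪ {0})))
    (c : ℝ) (hc : 0 < c) (d : Fin m → ℝ) (hd : ∀ i, 0 < d i) (w : ℝ)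
    (f : (Fin n → ℝ) → ℝ)
    (hf : ∀ x, f x = c * (∑ α ∈ orbitF ah, Real.exp (dotp α x))
      - (∑ i, d i * ∑ β ∈ orbitF (bh i), Real.exp (dotp β x)) + w) :
    infStar f
      = sageBound (orbitF ah ∪ Finset.univ.biUnion (fun i => orbitF (bh i))) f :=
  le_antisymm (infStar_le_sageBound fun _ hl => isSAGE_sub_of_forall_lt ah bh hint hc hd hf hl)
    (sageBound_le_infStar _ f)

/-- Theorem (exactness for one orbit of positive support points): for
`f = c Σ_{α ∈ S_n·α̂} e^{⟨α,x⟩} - Σᵢ dᵢ Σ_{β ∈ S_n·β̂ᵢ} e^{⟨β,x⟩} + w` with `c, dᵢ > 0`,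
`β̂ᵢ` in the interior of `conv(S_n·α̂ ∪ {0})` and in pairwise distinct orbits,
we have `f* = f^SAGE`. -/
theorem stmt9 {n m : ℕ} (ah : Fin n → ℝ) (bh : Fin m → (Fin n → ℝ))
    (hint : ∀ i, bh i ∈ interior (convexHull ℝ
      ((↑(orbitF ah) : Set (Fin n → ℝ)) ∪ {0})))
    (hdist : ∀ i j, i ≠ j → bh i ∉ orbitF (bh j))
    (c : ℝ) (hc : 0 < c) (d : Fin m → ℝ) (hd : ∀ i, 0 < d i) (w : ℝ)
    (f : (Fin n → ℝ) → ℝ)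
    (hf : ∀ x, f x = c * (∑ α ∈ orbitF ah, Real.exp (dotp α x))
      - (∑ i, d i * ∑ β ∈ orbitF (bh i), Real.exp (dotp β x)) + w) :
    infStar f
      = sageBound (orbitF ah ∪ Finset.univ.biUnion (fun i => orbitF (bh i))) f :=
  stmt9_general ah bh hint c hc d hd w f hf
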